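/- arXiv:2205.13905 — 3 statements merged into one kernel-verified Lean document; each statement's English description precedes it below -/
import Mathlib

section
/- Let G1,…,G9 be pairwise disjoint graphs, none containing an induced 5-cycle, arranged in a 3×3 grid pattern; the grid graph obtained by taking their union and adding all edges between vertices of distinct graphs lying in the same row or same column of the grid contains no induced 5-cycle. -/
/-- `G` contains an induced 5-cycle. -/
def HasInducedC5 {V : Type*} (G : SimpleGraph V) : Prop :=
  ∃ f : Fin 5 ↪ V, ∀ i j, G.Adj (f i) (f j) ↔ (SimpleGraph.cycleGraph 5).Adj i j

/-- The degree of a vertex. -/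
noncomputable def deg {V : Type*} (G : SimpleGraph V) (v : V) : ℕ :=
  Nat.card (G.neighborSet v)

/-- The 3×3 grid graph: vertices are placed at positions `p v` in a 3×3 grid;
`H` is the disjoint union of the nine blocks (its edges stay within blocks),
and additionally any two vertices in distinct blocks sharing a row or a column
are joined. -/
def gridOf {V : Type*} (H : SimpleGraph V) (p : V → Fin 3 × Fin 3) :
    SimpleGraph V where
  Adj u v := H.Adj u v ∨ (p u ≠ p v ∧ ((p u).1 = (p v).1 ∨ (p u).2 = (p v).2))
  symm := by
    constructor
    intro u v h
    rcases h with h | ⟨hne, hrc⟩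
    · exact Or.inl h.symm
    · exact Or.inr ⟨hne.symm, hrc.imp Eq.symm Eq.symm⟩
  loopless := by
    constructor
    intro v h
    rcases h with h | ⟨hne, _⟩
    · exact H.irrefl h
    · exact hne rfl

/-!
If an induced 5-cycle of `H ⊔ R.comap p` meets a fibre of `p` in two vertices, that fibre is a
module of the cycle (every other vertex of the cycle sees all of it or none of it, through `R`).
Since `C₅` has no modules other than singletons and the whole cycle, the cycle lies in one fibre,
where it is an induced cycle of `H`, or `p` is injective on it, giving an induced cycle of `R`.
For the rook graph `K₃ □ K₃` the second case is impossible: along an induced path the edges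
alternate between rows and columns, which cannot happen around a cycle of odd length.
-/

namespace SimpleGraph

variable {V ι : Type*}

def IsModule (G : SimpleGraph V) (S : Set V) : Prop :=
  ∀ ⦃s t v⦄, s ∈ S → t ∈ S → v ∉ S → (G.Adj v s ↔ G.Adj v t)

theorem card_le_one_or_eq_univ_of_cycleGraph_five_isModule {S : Finset (Fin 5)}
    (hS : (cycleGraph 5).IsModule S) :
    S.card ≤ 1 ∨ S = Finset.univ := by
  revert S
  simp only [IsModule, Finset.mem_coe]
  decide

theorem cycleGraph_five_const_or_injective {q : Fin 5 → ι}
    (hq : ∀ x, (cycleGraph 5).IsModule (q ⁻¹' {x})) :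
    (∀ i j, q i = q j) ∨ q.Injective := by
  classical
  by_contra! ⟨⟨i, j, hij⟩, hninj⟩
  obtain ⟨a, b, hab, hne⟩ := Function.not_injective_iff.1 hninj
  set S := Finset.univ.filter (fun k => q k = q a)
  have hS : (S : Set (Fin 5)) = q ⁻¹' {q a} := by ext; simp [S]
  rcases card_le_one_or_eq_univ_of_cycleGraph_five_isModule (hS ▸ hq (q a)) with hcard | huniv
  · exact hne (Finset.card_le_one.1 hcard a (by simp [S]) b (by simp [S, hab]))
  · have hi : i ∈ S := huniv ▸ Finset.mem_univ i
    have hj : j ∈ S := huniv ▸ Finset.mem_univ j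
    simp only [S, Finset.mem_filter] at hi hj
    exact hij (hi.2.trans hj.2.symm)

theorem not_hasInducedC5_sup_comap {H : SimpleGraph V} {R : SimpleGraph ι} {p : V → ι}
    (hblock : ∀ u v, H.Adj u v → p u = p v) (hH : ¬HasInducedC5 H) (hR : ¬HasInducedC5 R) :
    ¬HasInducedC5 (H ⊔ R.comap p) := by
  rintro ⟨f, hf⟩
  have adj_of_eq : ∀ i j, p (f i) = p (f j) →
      (H.Adj (f i) (f j) ↔ (cycleGraph 5).Adj i j) := by
    intro i j h
    simp [← hf, h]
  have adj_of_ne : ∀ i j, p (f i) ≠ p (f j) →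
      (R.Adj (p (f i)) (p (f j)) ↔ (cycleGraph 5).Adj i j) := by
    intro i j h
    simp [← hf, mt (hblock _ _) h]
  have hfibre : ∀ x, (cycleGraph 5).IsModule ((p ∘ f) ⁻¹' {x}) := by
    intro x s t v hs ht hv
    simp only [Set.mem_preimage, Function.comp_apply, Set.mem_singleton_iff] at hs ht hv
    rw [← adj_of_ne v s (hs ▸ hv), ← adj_of_ne v t (ht ▸ hv), hs, ht]
  rcases cycleGraph_five_const_or_injective hfibre with hconst | hinj
  · exact hH ⟨f, fun i j => adj_of_eq i j (hconst i j)⟩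
  · refine hR ⟨⟨p ∘ f, hinj⟩, fun i j => ?_⟩
    obtain rfl | hij := eq_or_ne i j
    · simp
    · exact adj_of_ne i j (hinj.ne hij)

theorem boxProd_top_adj_turn {α β : Type*} {a b c : α × β}
    (hab : ((⊤ : SimpleGraph α) □ (⊤ : SimpleGraph β)).Adj a b)
    (hbc : ((⊤ : SimpleGraph α) □ (⊤ : SimpleGraph β)).Adj b c)
    (hac : ¬((⊤ : SimpleGraph α) □ (⊤ : SimpleGraph β)).Adj a c) (hne : a ≠ c) :
    a.1 = b.1 ↔ b.1 ≠ c.1 := by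
  simp only [boxProd_adj, top_adj, Ne, Prod.ext_iff] at *
  grind

theorem not_hasInducedC5_boxProd_top (α β : Type*) :
    ¬HasInducedC5 ((⊤ : SimpleGraph α) □ (⊤ : SimpleGraph β)) := by
  rintro ⟨f, hf⟩
  have adj : ∀ i : Fin 5, (cycleGraph 5).Adj i (i + 1) := by decide
  have nonadj : ∀ i : Fin 5, ¬(cycleGraph 5).Adj i (i + 1 + 1) := by decide
  have ne : ∀ i : Fin 5, i ≠ i + 1 + 1 := by decide
  have turn (i : Fin 5) : (f i).1 = (f (i + 1)).1 ↔ (f (i + 1)).1 ≠ (f (i + 1 + 1)).1 :=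
    boxProd_top_adj_turn ((hf _ _).2 (adj _)) ((hf _ _).2 (adj _))
      (fun h => nonadj i ((hf _ _).1 h)) (f.injective.ne (ne i))
  have := turn 0; have := turn 1; have := turn 2; have := turn 3; have := turn 4
  simp only [Fin.reduceAdd] at *
  tauto

end SimpleGraph

theorem gridOf_eq_sup_comap {V : Type*} (H : SimpleGraph V) (p : V → Fin 3 × Fin 3) :
    gridOf H p = H ⊔ ((⊤ : SimpleGraph (Fin 3)) □ (⊤ : SimpleGraph (Fin 3))).comap p := by
  ext u v
  simp only [gridOf, SimpleGraph.sup_adj, SimpleGraph.comap_adj, SimpleGraph.boxProd_adj,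
    SimpleGraph.top_adj, Ne, Prod.ext_iff]
  tauto

/-- If none of the nine blocks contains an induced 5-cycle, the 3×3 grid graph
contains no induced 5-cycle. -/
theorem stmt_13 {V : Type*} (H : SimpleGraph V) (p : V → Fin 3 × Fin 3)
    (hblock : ∀ u v, H.Adj u v → p u = p v)
    (hH : ¬ HasInducedC5 H) :
    ¬ HasInducedC5 (gridOf H p) := by
  rw [gridOf_eq_sup_comap]
  exact SimpleGraph.not_hasInducedC5_sup_comap hblock hH
    (SimpleGraph.not_hasInducedC5_boxProd_top _ _)
end

section
/- For every n ≡ 3 (mod 4) and every odd d with 1 ≤ d ≤ n−1 and d ≠ (n−1)/2, there exists an n-vertex graph with no induced 5-cycle in which every vertex has degree d except one vertex of degree d+1 or d−1 (an almost d-regular graph). -/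
/-!
Having no induced `C₅` is preserved by complements (`C₅` is self-complementary) and by disjoint
unions (`C₅` is connected), and bipartite graphs have none (`C₅` is an odd cycle).
For odd `d` with `2d + 3 ≤ n`, take `K_{d+2}` minus a perfect matching on `d + 1` of its vertices
(all degrees `d`, except one vertex of degree `d + 1`) next to a `d`-regular graph on the
remaining even number `n - d - 2 > d` of vertices: a bipartite Haar graph over `ZMod ((n - d - 2) / 2)`,
or the complement of one. For the other odd `d ≠ (n - 1) / 2`, the degree `n - 1 - d` is of the
first kind, and the complement of its graph has degrees `d` and `d - 1`.
-/

open SimpleGraph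

section InducedC5

variable {V W : Type*} {G : SimpleGraph V} {H : SimpleGraph W}

theorem HasInducedC5.of_comap {f : V ↪ W} (h : HasInducedC5 (H.comap f)) : HasInducedC5 H :=
  let ⟨g, hg⟩ := h
  ⟨g.trans f, hg⟩

theorem HasInducedC5.of_forall_mem_range (φ : G ↪g H) (f : Fin 5 ↪ W)
    (hf : ∀ i j, H.Adj (f i) (f j) ↔ (cycleGraph 5).Adj i j) (hrange : ∀ i, f i ∈ Set.range φ) :
    HasInducedC5 G := by
  choose g hg using hrange
  refine ⟨⟨g, fun i j hij => f.injective (by rw [← hg i, ← hg j, hij])⟩, fun i j => ?_⟩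
  show G.Adj (g i) (g j) ↔ _
  rw [← φ.map_adj_iff, hg, hg, hf]

theorem not_hasInducedC5_of_coloring (C : G.Coloring Bool) : ¬ HasInducedC5 G := by
  rintro ⟨f, hf⟩
  have hC (i j : Fin 5) (hij : (cycleGraph 5).Adj i j) : C (f i) ≠ C (f j) :=
    C.valid ((hf i j).mpr hij)
  have h01 := hC 0 1 (by decide)
  have h12 := hC 1 2 (by decide)
  have h23 := hC 2 3 (by decide)
  have h34 := hC 3 4 (by decide)
  have h40 := hC 4 0 (by decide)
  revert h01 h12 h23 h34 h40
  cases C (f 0) <;> cases C (f 1) <;> cases C (f 2) <;> cases C (f 3) <;> cases C (f 4) <;> simp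

theorem not_hasInducedC5_bot : ¬ HasInducedC5 (⊥ : SimpleGraph V) :=
  not_hasInducedC5_of_coloring (Coloring.mk (fun _ => true) fun h => h.elim)

theorem not_hasInducedC5_compl (h : ¬ HasInducedC5 G) : ¬ HasInducedC5 Gᶜ := by
  rintro ⟨f, hf⟩
  -- `i ↦ 2 * i` is an isomorphism from `C₅` onto its complement
  have hC5 : ∀ i j : Fin 5,
      (cycleGraph 5).Adj i j ↔ i ≠ j ∧ ¬ (cycleGraph 5).Adj (2 * i) (2 * j) := by
    decide
  have hdouble : ∀ i j : Fin 5, 2 * i = 2 * j ↔ i = j := by decide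
  refine h ⟨⟨fun i => f (2 * i), fun i j hij => (hdouble i j).mp (f.injective hij)⟩,
    fun i j => ?_⟩
  have hij := hf (2 * i) (2 * j)
  rw [compl_adj, f.injective.ne_iff, Ne, hdouble] at hij
  show G.Adj (f (2 * i)) (f (2 * j)) ↔ _
  rw [hC5, ← hij]
  exact ⟨fun hadj => ⟨fun hij => hadj.ne (by rw [hij]), fun h' => h'.2 hadj⟩,
    fun ⟨hne, hnadj⟩ => not_not.mp fun hnot => hnadj ⟨hne, hnot⟩⟩

theorem isLeft_eq_of_sum_adj {x y : V ⊕ W} (h : (G ⊕g H).Adj x y) : x.isLeft = y.isLeft := by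
  cases x <;> cases y <;> simp_all

theorem not_hasInducedC5_sum (hG : ¬ HasInducedC5 G) (hH : ¬ HasInducedC5 H) :
    ¬ HasInducedC5 (G ⊕g H) := by
  rintro ⟨f, hf⟩
  have hstep (i j : Fin 5) (hij : (cycleGraph 5).Adj i j) : (f i).isLeft = (f j).isLeft :=
    isLeft_eq_of_sum_adj ((hf i j).mpr hij)
  have hside : ∀ i, (f i).isLeft = (f 0).isLeft := by
    have h01 := hstep 0 1 (by decide)
    have h12 := hstep 1 2 (by decide)
    have h23 := hstep 2 3 (by decide)
    have h34 := hstep 3 4 (by decide)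
    intro i
    fin_cases i <;> simp_all
  cases hleft : (f 0).isLeft
  · refine hH (.of_forall_mem_range Embedding.sumInr f hf fun i => ?_)
    obtain ⟨y, hy⟩ := Sum.isRight_iff.mp (Sum.isLeft_eq_false.mp ((hside i).trans hleft))
    exact ⟨y, hy.symm⟩
  · refine hG (.of_forall_mem_range Embedding.sumInl f hf fun i => ?_)
    obtain ⟨x, hx⟩ := Sum.isLeft_iff.mp ((hside i).trans hleft)
    exact ⟨x, hx.symm⟩

end InducedC5

section Degree

variable {V W : Type*}

theorem deg_compl [Finite V] (G : SimpleGraph V) (v : V) :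
    deg Gᶜ v = Nat.card V - 1 - deg G v := by
  classical
  have := Fintype.ofFinite V
  simp only [deg, Nat.card_eq_fintype_card, card_neighborSet_eq_degree, degree_compl]

theorem deg_sum_inl (G : SimpleGraph V) (H : SimpleGraph W) (v : V) :
    deg (G ⊕g H) (.inl v) = deg G v := by
  rw [deg, neighborSet_sum_inl, Nat.card_image_of_injective Sum.inl_injective, deg]

theorem deg_sum_inr (G : SimpleGraph V) (H : SimpleGraph W) (w : W) :
    deg (G ⊕g H) (.inr w) = deg H w := by
  rw [deg, neighborSet_sum_inr, Nat.card_image_of_injective Sum.inr_injective, deg]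

theorem deg_comap_equiv (e : V ≃ W) (H : SimpleGraph W) (v : V) :
    deg (H.comap e) v = deg H (e v) := by
  have : (H.comap e).neighborSet v = e.symm '' H.neighborSet (e v) := by
    ext u
    simp [Equiv.image_symm_eq_preimage]
  rw [deg, this, Nat.card_image_of_injective e.symm.injective, deg]

theorem deg_bot (v : V) : deg (⊥ : SimpleGraph V) v = 0 := by
  simp [deg]

end Degree

def haarGraph {A : Type*} [AddCommGroup A] (T : Set A) : SimpleGraph (A ⊕ A) where
  Adj
    | .inl x, .inr y | .inr y, .inl x => y - x ∈ T
    | _, _ => False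
  symm := ⟨by rintro (x | x) (y | y) h <;> exact h⟩
  loopless := ⟨by rintro (x | x) h <;> exact h⟩

namespace haarGraph

variable {A : Type*} [AddCommGroup A] (T : Set A)

theorem neighborSet_inl (x : A) :
    (haarGraph T).neighborSet (.inl x) = Sum.inr '' ((x + ·) '' T) := by
  ext (y | y) <;> simp [haarGraph, neg_add_eq_sub]

theorem neighborSet_inr (y : A) :
    (haarGraph T).neighborSet (.inr y) = Sum.inl '' ((y - ·) '' T) := by
  ext (x | x) <;> simp [haarGraph, sub_eq_iff_comm]

theorem deg_eq (v : A ⊕ A) : deg (haarGraph T) v = Nat.card T := by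
  rcases v with x | y
  · rw [deg, neighborSet_inl, Nat.card_image_of_injective Sum.inr_injective,
      Nat.card_image_of_injective (add_right_injective x)]
  · rw [deg, neighborSet_inr, Nat.card_image_of_injective Sum.inl_injective,
      Nat.card_image_of_injective sub_right_injective]

theorem not_hasInducedC5 : ¬ HasInducedC5 (haarGraph T) :=
  not_hasInducedC5_of_coloring
    (Coloring.mk Sum.isLeft (by rintro (x | x) (y | y) h <;> simp_all [haarGraph]))

end haarGraph

theorem exists_regular_not_hasInducedC5 (A : Type*) [AddCommGroup A] [Finite A] {d : ℕ}
    (hd : d < 2 * Nat.card A) :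
    ∃ G : SimpleGraph (A ⊕ A), ¬ HasInducedC5 G ∧ ∀ v, deg G v = d := by
  have haar (k : ℕ) (hk : k ≤ Nat.card A) :
      ∃ G : SimpleGraph (A ⊕ A), ¬ HasInducedC5 G ∧ ∀ v, deg G v = k := by
    obtain ⟨T, -, hT⟩ :=
      Set.exists_subset_card_eq (s := Set.univ) (n := k) (by rwa [Set.ncard_univ])
    exact ⟨haarGraph T, haarGraph.not_hasInducedC5 T,
      fun v => by rw [haarGraph.deg_eq, Nat.card_coe_set_eq, hT]⟩
  rcases le_or_gt d (Nat.card A) with hle | hgt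
  · exact haar d hle
  · obtain ⟨G, hG, hdeg⟩ := haar (2 * Nat.card A - 1 - d) (by omega)
    refine ⟨Gᶜ, not_hasInducedC5_compl hG, fun v => ?_⟩
    rw [deg_compl, hdeg, Nat.card_sum]
    omega

theorem exists_almostRegular_sum_unit (A : Type*) [AddCommGroup A] [Finite A] :
    ∃ G : SimpleGraph ((A ⊕ A) ⊕ Unit), ¬ HasInducedC5 G ∧
      (∀ v, deg G (.inl v) = 2 * Nat.card A - 1) ∧ deg G (.inr ()) = 2 * Nat.card A := by
  refine ⟨(haarGraph {0} ⊕g ⊥)ᶜ, not_hasInducedC5_compl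
    (not_hasInducedC5_sum (haarGraph.not_hasInducedC5 _) not_hasInducedC5_bot), fun v => ?_, ?_⟩
  · rw [deg_compl, deg_sum_inl, haarGraph.deg_eq]
    simp only [Nat.card_sum, Nat.card_unique]
    omega
  · rw [deg_compl, deg_sum_inr, deg_bot]
    simp only [Nat.card_sum, Nat.card_unique]
    omega

theorem exists_almostRegular_succ {n d : ℕ} (hd : Odd d) (hn : Odd n) (hdn : 2 * d + 3 ≤ n) :
    ∃ G : SimpleGraph (Fin n), ¬ HasInducedC5 G ∧
      ∃ w, (∀ v, v ≠ w → deg G v = d) ∧ deg G w = d + 1 := by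
  obtain ⟨k, rfl⟩ := hd
  obtain ⟨b, rfl⟩ : ∃ b, n = (2 * k + 2 + 1) + 2 * b := ⟨(n - 2 * k - 3) / 2, by grind⟩
  have : NeZero b := ⟨by omega⟩
  obtain ⟨S, hS, hSdeg, hSw⟩ := exists_almostRegular_sum_unit (ZMod (k + 1))
  obtain ⟨R, hR, hRdeg⟩ := exists_regular_not_hasInducedC5 (ZMod b) (d := 2 * k + 1)
    (by rw [Nat.card_zmod]; omega)
  have hcard : Nat.card (((ZMod (k + 1) ⊕ ZMod (k + 1)) ⊕ Unit) ⊕ (ZMod b ⊕ ZMod b)) =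
      (2 * k + 2 + 1) + 2 * b := by
    simp only [Nat.card_sum, Nat.card_zmod, Nat.card_unique]
    ring
  let e := (Finite.equivFin _).trans (finCongr hcard)
  refine ⟨(S ⊕g R).comap e.symm,
    fun h => not_hasInducedC5_sum hS hR (.of_comap (f := e.symm.toEmbedding) h),
    e (.inl (.inr ())), fun v hv => ?_, ?_⟩
  · rw [deg_comap_equiv]
    rcases hv' : e.symm v with (x | ⟨⟩) | y
    · rw [deg_sum_inl, hSdeg, Nat.card_zmod]
      omega
    · exact absurd (e.symm_apply_eq.mp hv') hv
    · rw [deg_sum_inr, hRdeg]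
  · rw [deg_comap_equiv, Equiv.symm_apply_apply, deg_sum_inl, hSw, Nat.card_zmod]
    ring

theorem stmt_16_general (n d : ℕ) (hn : n % 4 = 3) (hd : Odd d)
    (hdn : d ≤ n - 1) (hne : d ≠ (n - 1) / 2) :
    ∃ G : SimpleGraph (Fin n), ¬ HasInducedC5 G ∧
      ∃ w : Fin n, (∀ v, v ≠ w → deg G v = d) ∧
        (deg G w = d + 1 ∨ deg G w = d - 1) := by
  have hn' : Odd n := Nat.odd_iff.mpr (by omega)
  have hd' := Nat.odd_iff.mp hd
  rcases le_or_gt (2 * d + 3) n with hsmall | hlarge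
  · obtain ⟨G, hG, w, hw, hwdeg⟩ := exists_almostRegular_succ hd hn' hsmall
    exact ⟨G, hG, w, hw, .inl hwdeg⟩
  · obtain ⟨G, hG, w, hw, hwdeg⟩ :=
      exists_almostRegular_succ (d := n - 1 - d) (Nat.odd_iff.mpr (by omega)) hn' (by omega)
    refine ⟨Gᶜ, not_hasInducedC5_compl hG, w, fun v hv => ?_, .inr ?_⟩
    · rw [deg_compl, hw v hv, Nat.card_fin]
      omega
    · rw [deg_compl, hwdeg, Nat.card_fin]
      omega

/-- For every `n ≡ 3 (mod 4)` and odd `d` with `1 ≤ d ≤ n−1`, `d ≠ (n−1)/2`,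
there is an almost `d`-regular graph on `n` vertices with no induced 5-cycle:
all vertices but one have degree `d`, and the remaining vertex has
degree `d+1` or `d−1`. -/
theorem stmt_16 (n d : ℕ) (hn : n % 4 = 3) (hd : Odd d) (hd1 : 1 ≤ d)
    (hdn : d ≤ n - 1) (hne : d ≠ (n - 1) / 2) :
    ∃ G : SimpleGraph (Fin n), ¬ HasInducedC5 G ∧
      ∃ w : Fin n, (∀ v, v ≠ w → deg G v = d) ∧
        (deg G w = d + 1 ∨ deg G w = d - 1) :=
  stmt_16_general n d hn hd hdn hne
end

section
/- There exists a graph on 27 vertices with no induced 5-cycle in which 24 vertices have degree 13 and three vertices have degree 12. -/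
/-!
The graph is the rook's graph `K₃ □ K₃` with every vertex blown up into a clique or an
independent set: row by row the blocks have sizes 4 3 2 / 4 2 3 / 4 3 2, and the blocks of
size 4 and the central block are independent. Two vertices of an induced `C₅` never lie in one
block: a vertex of the `C₅` adjacent to the first but not to the second cannot sit outside the
block (the block vertices are twins there), and inside it makes the block a clique, hence
adjacent to both. So an induced `C₅` of the blow-up projects to one of `K₃ □ K₃`, and there is
none: along an induced path of a rook's graph the steps alternate between rows and columns,
which is impossible around a cycle of odd length. The degrees are then a finite computation.
-/

open SimpleGraph

namespace SimpleGraph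

variable {α β ι V : Type*}

instance [DecidableEq α] [DecidableEq β] (G : SimpleGraph α) (H : SimpleGraph β)
    [DecidableRel G.Adj] [DecidableRel H.Adj] : DecidableRel (G □ H).Adj :=
  fun _ _ => decidable_of_iff' _ boxProd_adj

lemma boxProd_top_adj_turn_s18 {x y z : α × β}
    (hxy : ((⊤ : SimpleGraph α) □ (⊤ : SimpleGraph β)).Adj x y)
    (hyz : ((⊤ : SimpleGraph α) □ (⊤ : SimpleGraph β)).Adj y z)
    (hxz : ¬ ((⊤ : SimpleGraph α) □ (⊤ : SimpleGraph β)).Adj x z) (hne : x ≠ z) :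
    x.1 = y.1 ↔ ¬ y.1 = z.1 := by
  simp only [boxProd_adj, top_adj] at hxy hyz hxz
  obtain ⟨x1, x2⟩ := x
  obtain ⟨y1, y2⟩ := y
  obtain ⟨z1, z2⟩ := z
  simp only [ne_eq, Prod.mk.injEq] at *
  grind

def blowup (H : SimpleGraph ι) (π : V → ι) (c : Set ι) : SimpleGraph V where
  Adj u v := u ≠ v ∧ (H.Adj (π u) (π v) ∨ π u = π v ∧ π u ∈ c)
  symm := ⟨fun _ _ ⟨hne, h⟩ =>
    ⟨hne.symm, h.imp (fun h => h.symm) fun ⟨e, hc⟩ => ⟨e.symm, e ▸ hc⟩⟩⟩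
  loopless := ⟨fun _ h => h.1 rfl⟩

instance [DecidableEq V] [DecidableEq ι] (H : SimpleGraph ι) [DecidableRel H.Adj] (π : V → ι)
    (c : Set ι) [DecidablePred (· ∈ c)] : DecidableRel (H.blowup π c).Adj :=
  fun _ _ => inferInstanceAs (Decidable (_ ∧ _))

variable {H : SimpleGraph ι} {π : V → ι} {c : Set ι} {u v : V}

lemma blowup_adj_of_ne (h : π u ≠ π v) : (H.blowup π c).Adj u v ↔ H.Adj (π u) (π v) :=
  ⟨fun hadj => hadj.2.resolve_right fun h' => h h'.1,
    fun hadj => ⟨fun e => h (e ▸ rfl), Or.inl hadj⟩⟩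

lemma blowup_adj_of_eq (h : π u = π v) (hne : u ≠ v) :
    (H.blowup π c).Adj u v ↔ π u ∈ c := by
  simp [blowup, h, hne]

end SimpleGraph

lemma cycleGraph_five_adj_add_one (m : Fin 5) : (cycleGraph 5).Adj m (m + 1) := by
  revert m; decide

lemma cycleGraph_five_not_adj_add_two (m : Fin 5) :
    ¬ (cycleGraph 5).Adj m (m + 1 + 1) := by
  revert m; decide

lemma cycleGraph_five_exists_adj_not_adj {i j : Fin 5} (hij : i ≠ j) :
    ∃ k, k ≠ j ∧ (cycleGraph 5).Adj i k ∧ ¬ (cycleGraph 5).Adj j k := by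
  revert i j; decide

lemma not_forall_iff_not_add_one_fin_five (t : Fin 5 → Prop) : ¬ ∀ m, t m ↔ ¬ t (m + 1) := by
  intro h
  have h0 : t 0 ↔ ¬ t 1 := h 0
  have h1 : t 1 ↔ ¬ t 2 := h 1
  have h2 : t 2 ↔ ¬ t 3 := h 2
  have h3 : t 3 ↔ ¬ t 4 := h 3
  have h4 : t 4 ↔ ¬ t 0 := h 4
  tauto

theorem not_hasInducedC5_boxProd_top {α β : Type*} :
    ¬ HasInducedC5 ((⊤ : SimpleGraph α) □ (⊤ : SimpleGraph β)) := by
  rintro ⟨f, hf⟩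
  refine not_forall_iff_not_add_one_fin_five (fun m => (f m).1 = (f (m + 1)).1) fun m => ?_
  exact boxProd_top_adj_turn_s18 ((hf _ _).2 (cycleGraph_five_adj_add_one _))
    ((hf _ _).2 (cycleGraph_five_adj_add_one _))
    (fun h => cycleGraph_five_not_adj_add_two m ((hf _ _).1 h)) (f.injective.ne (by grind))

theorem HasInducedC5.of_blowup {ι V : Type*} {H : SimpleGraph ι} {π : V → ι} {c : Set ι}
    (h : HasInducedC5 (H.blowup π c)) : HasInducedC5 H := by
  obtain ⟨f, hf⟩ := h
  have hinj : Function.Injective (π ∘ f) := by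
    intro i j hij
    change π (f i) = π (f j) at hij
    by_contra hne
    obtain ⟨k, hkj, hik, hjk⟩ := cycleGraph_five_exists_adj_not_adj hne
    rw [← hf] at hik hjk
    apply hjk
    by_cases hk : π (f i) = π (f k)
    · rw [blowup_adj_of_eq hk hik.ne] at hik
      rw [blowup_adj_of_eq (hij.symm.trans hk) (f.injective.ne hkj).symm, ← hij]
      exact hik
    · rw [blowup_adj_of_ne hk] at hik
      rw [blowup_adj_of_ne (hij ▸ hk), ← hij]
      exact hik
  refine ⟨⟨π ∘ f, hinj⟩, fun i j => ?_⟩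
  by_cases hij : i = j
  · subst hij
    simp
  · exact (blowup_adj_of_ne (c := c) (u := f i) (v := f j) (hinj.ne hij)).symm.trans (hf i j)

lemma deg_eq_degree {V : Type*} (G : SimpleGraph V) [G.LocallyFinite] :
    deg G = fun v => G.degree v :=
  funext fun v => by rw [deg, Nat.card_eq_fintype_card, card_neighborSet_eq_degree]

def block (v : Fin 27) : Fin 3 × Fin 3 :=
  if v < 4 then (0, 0) else if v < 7 then (0, 1) else if v < 9 then (0, 2)
  else if v < 13 then (1, 0) else if v < 15 then (1, 1) else if v < 18 then (1, 2)
  else if v < 22 then (2, 0) else if v < 25 then (2, 1) else (2, 2)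

def cliqueBlocks : Finset (Fin 3 × Fin 3) := {(0, 1), (0, 2), (1, 2), (2, 1), (2, 2)}

abbrev blownUpRookGraph : SimpleGraph (Fin 27) :=
  ((⊤ : SimpleGraph (Fin 3)) □ (⊤ : SimpleGraph (Fin 3))).blowup block cliqueBlocks

/-- There is a 27-vertex graph with no induced 5-cycle in which 24 vertices
have degree 13 and three vertices have degree 12. -/
theorem stmt_18 :
    ∃ G : SimpleGraph (Fin 27), ¬ HasInducedC5 G ∧
      Nat.card {v : Fin 27 // deg G v = 13} = 24 ∧
      Nat.card {v : Fin 27 // deg G v = 12} = 3 := by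
  refine ⟨blownUpRookGraph, fun h => not_hasInducedC5_boxProd_top h.of_blowup, ?_, ?_⟩ <;>
    rw [deg_eq_degree, Nat.card_eq_fintype_card] <;> decide
end
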